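/- Let n ≥ 1, σ > 0, ν > 0, let X be a nonempty set, let K be an n×n real symmetric positive semidefinite matrix with all diagonal entries K_{i,i} ≤ 1, let y ∈ ℝⁿ, and let v : X → ℝⁿ be such that for every x ∈ X the bordered (n+1)×(n+1) matrix [[K, v(x)], [v(x)ᵀ, 1]] is positive semidefinite. Define the posterior mean μ(x) = v(x)ᵀ (K + σ² I)^{−1} y, the posterior standard deviation s(x) = (1 − v(x)ᵀ (K + σ² I)^{−1} v(x))^{1/2}, and suppose x⁺ ∈ X satisfies μ(x⁺) ≥ μ(x) for all x ∈ X; write μ⁺ = μ(x⁺). Define the expected improvement EI(x) = ν s(x) τ((μ(x) − μ⁺)/(ν s(x))), where τ(z) = z Φ(z) + φ(z). If x* ∈ X satisfies EI(x*) ≥ EI(x) for all x ∈ X, then |μ(x*) − μ⁺| ≤ (log(n + σ²) − log(σ²))^{1/2} · ν s(x*). -/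

import Mathlib

/-!
Write `q = vᵀ(K + σ²I)⁻¹v` and `w = (K + σ²I)⁻¹v`, so that `q = wᵀKw + σ²‖w‖²`. Positivity of the
bordered matrix is the Schur-complement inequality `(wᵀv)² ≤ wᵀKw`, and `|K i j| ≤ 1` gives
`wᵀKw ≤ n‖w‖²`; together they force `q ≤ n/(n + σ²)`, i.e. `σ²/(n + σ²) ≤ s² ≤ 1`.

Since `μ(x*) ≤ μ⁺`, the argument `z` of `τ` at `x*` is nonpositive, where `τ(z) ≤ φ(z)`. Comparing
`EI(x*)` with `EI(x⁺) = ν s(x⁺) φ(0)` gives `s(x⁺) ≤ s(x*) e^{-z²/2} ≤ e^{-z²/2}`, and the lower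
bound on `s(x⁺)` turns this into `z² ≤ log((n + σ²)/σ²)`.
-/

open Matrix

/-- The standard normal density `φ`. -/
noncomputable def stdNormalPdf (z : ℝ) : ℝ :=
  (Real.sqrt (2 * Real.pi))⁻¹ * Real.exp (-z ^ 2 / 2)

/-- The standard normal cumulative distribution function `Φ`. -/
noncomputable def stdNormalCdf (z : ℝ) : ℝ := ∫ t in Set.Iic z, stdNormalPdf t

/-- `τ(z) = z Φ(z) + φ(z)`. -/
noncomputable def tauEI (z : ℝ) : ℝ := z * stdNormalCdf z + stdNormalPdf z

lemma stdNormalPdf_pos (z : ℝ) : 0 < stdNormalPdf z := by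
  unfold stdNormalPdf
  positivity

lemma stdNormalPdf_eq_exp_mul (z : ℝ) :
    stdNormalPdf z = Real.exp (-z ^ 2 / 2) * stdNormalPdf 0 := by
  simp [stdNormalPdf, mul_comm]

lemma stdNormalCdf_nonneg (z : ℝ) : 0 ≤ stdNormalCdf z :=
  MeasureTheory.setIntegral_nonneg measurableSet_Iic fun t _ => (stdNormalPdf_pos t).le

lemma tauEI_zero : tauEI 0 = stdNormalPdf 0 := by simp [tauEI]

lemma tauEI_le_stdNormalPdf {z : ℝ} (hz : z ≤ 0) : tauEI z ≤ stdNormalPdf z := by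
  have : z * stdNormalCdf z ≤ 0 := mul_nonpos_of_nonpos_of_nonneg hz (stdNormalCdf_nonneg z)
  unfold tauEI
  linarith

lemma sq_le_neg_log_sq_of_mul_tauEI_le {a b z : ℝ} (ha : 0 < a) (hb₀ : 0 ≤ b) (hb₁ : b ≤ 1)
    (hz : z ≤ 0) (h : a * tauEI 0 ≤ b * tauEI z) : z ^ 2 ≤ -Real.log (a ^ 2) := by
  have hφ := stdNormalPdf_pos
  have ha_le : a ≤ Real.exp (-z ^ 2 / 2) := by
    refine le_of_mul_le_mul_right ?_ (hφ 0)
    calc a * stdNormalPdf 0 = a * tauEI 0 := by rw [tauEI_zero]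
      _ ≤ b * tauEI z := h
      _ ≤ b * stdNormalPdf z := mul_le_mul_of_nonneg_left (tauEI_le_stdNormalPdf hz) hb₀
      _ ≤ stdNormalPdf z := mul_le_of_le_one_left (hφ z).le hb₁
      _ = Real.exp (-z ^ 2 / 2) * stdNormalPdf 0 := stdNormalPdf_eq_exp_mul z
  have hlog : Real.log a ≤ -z ^ 2 / 2 := by
    simpa using Real.log_le_log ha ha_le
  rw [Real.log_pow]
  push_cast
  linarith

lemma abs_le_sqrt_mul_of_sq_div_le {d t L : ℝ} (ht : 0 < t) (h : (d / t) ^ 2 ≤ L) :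
    |d| ≤ Real.sqrt L * t := by
  calc |d| = Real.sqrt ((d / t) ^ 2) * t := by
        rw [Real.sqrt_sq_eq_abs, abs_div, abs_of_pos ht, div_mul_cancel₀ _ ht.ne']
    _ ≤ Real.sqrt L * t := by gcongr

section QuadraticForms

variable {ι : Type*}

lemma Matrix.PosSemidef.posDef_add_smul_one [DecidableEq ι] {K : Matrix ι ι ℝ} (hK : K.PosSemidef)
    {r : ℝ} (hr : 0 < r) : (K + r • 1).PosDef := by
  rw [smul_one_eq_diagonal]
  exact PosDef.posSemidef_add hK (PosDef.diagonal fun _ => hr)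

variable [Fintype ι]

lemma Matrix.PosSemidef.abs_apply_le {K : Matrix ι ι ℝ} (hK : K.PosSemidef) (i j : ι) :
    |K i j| ≤ (K i i + K j j) / 2 := by
  classical
  have hsymm : K j i = K i j := by simpa using hK.1.apply i j
  have hplus := hK.dotProduct_mulVec_nonneg (Pi.single i 1 + Pi.single j 1)
  have hminus := hK.dotProduct_mulVec_nonneg (Pi.single i 1 - Pi.single j 1)
  simp only [star_trivial, mulVec_add, mulVec_sub, dotProduct_add, dotProduct_sub, add_dotProduct,
    sub_dotProduct, mulVec_single, single_dotProduct, one_mul, MulOpposite.op_one, one_smul,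
    col_apply] at hplus hminus
  rw [abs_le]
  constructor <;> linarith

lemma dotProduct_mulVec_le_card_mul {K : Matrix ι ι ℝ} (hK : K.PosSemidef)
    (hdiag : ∀ i, K i i ≤ 1) (u : ι → ℝ) :
    u ⬝ᵥ K *ᵥ u ≤ Fintype.card ι * (u ⬝ᵥ u) := by
  have hentry (i j : ι) : u i * (K i j * u j) ≤ (u i ^ 2 + u j ^ 2) / 2 := by
    have hK_ij : |K i j| ≤ 1 := (hK.abs_apply_le i j).trans (by linarith [hdiag i, hdiag j])
    obtain ⟨hlower, hupper⟩ := abs_le.mp hK_ij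
    nlinarith [mul_nonneg (sub_nonneg.mpr hupper) (sq_nonneg (u i + u j)),
      mul_nonneg (neg_le_iff_add_nonneg.mp hlower) (sq_nonneg (u i - u j))]
  calc u ⬝ᵥ K *ᵥ u = ∑ i, ∑ j, u i * (K i j * u j) := by
        simp only [dotProduct, mulVec, Finset.mul_sum]
    _ ≤ ∑ i, ∑ j, (u i ^ 2 + u j ^ 2) / 2 := by gcongr with i _ j _; exact hentry i j
    _ = Fintype.card ι * (u ⬝ᵥ u) := by
        simp only [add_div, Finset.sum_add_distrib, Finset.sum_const, Finset.card_univ,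
          nsmul_eq_mul, ← Finset.sum_div, ← Finset.mul_sum, dotProduct, sq]
        ring

lemma sq_dotProduct_le_of_posSemidef_fromBlocks {K : Matrix ι ι ℝ} {w : ι → ℝ}
    (h : (fromBlocks K (replicateCol Unit w) (replicateRow Unit w) 1).PosSemidef) (u : ι → ℝ) :
    (u ⬝ᵥ w) ^ 2 ≤ u ⬝ᵥ K *ᵥ u := by
  let : Invertible (1 : Matrix Unit Unit ℝ) := invertibleOne
  have hrow : replicateRow Unit w = (replicateCol Unit w)ᴴ := by simp
  rw [hrow, PosDef.fromBlocks₂₂ _ _ PosDef.one, inv_one, Matrix.mul_one, ← hrow,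
    ← vecMulVec_eq] at h
  have := h.dotProduct_mulVec_nonneg u
  simp only [star_trivial, sub_mulVec, dotProduct_sub, vecMulVec_mulVec, dotProduct_smul,
    op_smul_eq_mul, sub_nonneg] at this
  rwa [dotProduct_comm w u, ← sq] at this

variable [DecidableEq ι]

lemma dotProduct_inv_add_smul_one_mulVec_nonneg {K : Matrix ι ι ℝ} (hK : K.PosSemidef) {r : ℝ}
    (hr : 0 < r) (w : ι → ℝ) : 0 ≤ w ⬝ᵥ (K + r • 1)⁻¹ *ᵥ w := by
  simpa using (hK.posDef_add_smul_one hr).inv.posSemidef.dotProduct_mulVec_nonneg w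

lemma dotProduct_inv_add_smul_one_mulVec_le {K : Matrix ι ι ℝ} (hK : K.PosSemidef) {r m : ℝ}
    (hr : 0 < r) (hm : 0 ≤ m) (hKm : ∀ u, u ⬝ᵥ K *ᵥ u ≤ m * (u ⬝ᵥ u)) {w : ι → ℝ}
    (hw : ∀ u, (u ⬝ᵥ w) ^ 2 ≤ u ⬝ᵥ K *ᵥ u) :
    w ⬝ᵥ (K + r • 1)⁻¹ *ᵥ w ≤ m / (m + r) := by
  set A := K + r • 1
  have hA_det : IsUnit A.det := (hK.posDef_add_smul_one hr).det_pos.ne'.isUnit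
  set u := A⁻¹ *ᵥ w
  have hAu : A *ᵥ u = w := by rw [mulVec_mulVec, mul_nonsing_inv _ hA_det, one_mulVec]
  set q := w ⬝ᵥ u
  have hq_split : q = u ⬝ᵥ K *ᵥ u + r * (u ⬝ᵥ u) := by
    calc w ⬝ᵥ u = (K *ᵥ u + r • u) ⬝ᵥ u := by rw [← hAu, add_mulVec, smul_mulVec, one_mulVec]
      _ = u ⬝ᵥ K *ᵥ u + r * (u ⬝ᵥ u) := by
        rw [add_dotProduct, smul_dotProduct, smul_eq_mul, dotProduct_comm]
  have hq_sq : q ^ 2 ≤ u ⬝ᵥ K *ᵥ u := by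
    rw [show q = u ⬝ᵥ w from dotProduct_comm w u]
    exact hw u
  have hq₀ : 0 ≤ q := dotProduct_inv_add_smul_one_mulVec_nonneg hK hr w
  have huu : 0 ≤ u ⬝ᵥ u := by simpa using dotProduct_star_self_nonneg u
  -- `(m + r) q² ≤ (m + r) uᵀKu ≤ m (uᵀKu + r‖u‖²) = m q`
  have key : (m + r) * q ^ 2 ≤ m * q := by nlinarith [hKm u]
  rcases hq₀.eq_or_lt with hq | hq
  · rw [← hq]; positivity
  · rw [le_div_iff₀ (by positivity)]
    nlinarith

lemma div_le_one_sub_dotProduct_inv_add_smul_one_mulVec {K : Matrix ι ι ℝ} (hK : K.PosSemidef)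
    (hdiag : ∀ i, K i i ≤ 1) {r : ℝ} (hr : 0 < r) {w : ι → ℝ}
    (hw : (fromBlocks K (replicateCol Unit w) (replicateRow Unit w) 1).PosSemidef) :
    r / (Fintype.card ι + r) ≤ 1 - w ⬝ᵥ (K + r • 1)⁻¹ *ᵥ w := by
  have := dotProduct_inv_add_smul_one_mulVec_le hK hr (Nat.cast_nonneg _)
    (dotProduct_mulVec_le_card_mul hK hdiag) (sq_dotProduct_le_of_posSemidef_fromBlocks hw)
  have hsplit : r / (Fintype.card ι + r) = 1 - Fintype.card ι / (Fintype.card ι + r) := by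
    field_simp
    ring
  linarith

end QuadraticForms

theorem ei_maximizer_mean_gap_bound_general
    (n : ℕ) (σ ν : ℝ) (hσ : 0 < σ) (hν : 0 < ν)
    {X : Type*}
    (K : Matrix (Fin n) (Fin n) ℝ) (hK : K.PosSemidef) (hdiag : ∀ i, K i i ≤ 1)
    (v : X → Fin n → ℝ)
    (hB : ∀ x : X, (Matrix.fromBlocks K
        (Matrix.of fun i (_ : Unit) => v x i)
        (Matrix.of fun (_ : Unit) j => v x j)
        (Matrix.of fun (_ : Unit) (_ : Unit) => (1 : ℝ))).PosSemidef)
    (μ : X → ℝ)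
    (s : X → ℝ) (hs : ∀ x, s x = Real.sqrt (1 - v x ⬝ᵥ (K + σ ^ 2 • 1)⁻¹.mulVec (v x)))
    (xp : X) (hxp : ∀ x, μ x ≤ μ xp)
    (EI : X → ℝ) (hEI : ∀ x, EI x = ν * s x * tauEI ((μ x - μ xp) / (ν * s x)))
    (xs : X) (hxs : ∀ x, EI x ≤ EI xs) :
    |μ xs - μ xp| ≤
      Real.sqrt (Real.log (n + σ ^ 2) - Real.log (σ ^ 2)) * (ν * s xs) := by
  have hσ2 : 0 < σ ^ 2 := by positivity
  have hB' (x : X) :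
      (fromBlocks K (replicateCol Unit (v x)) (replicateRow Unit (v x)) 1).PosSemidef := by
    rw [show (1 : Matrix Unit Unit ℝ) = of fun _ _ => 1 by ext; simp]
    exact hB x
  have hvar (x : X) : σ ^ 2 / (n + σ ^ 2) ≤ 1 - v x ⬝ᵥ (K + σ ^ 2 • 1)⁻¹ *ᵥ v x := by
    simpa using div_le_one_sub_dotProduct_inv_add_smul_one_mulVec hK hdiag hσ2 (hB' x)
  have hs_sq (x : X) : σ ^ 2 / (n + σ ^ 2) ≤ s x ^ 2 := by
    rw [hs x, Real.sq_sqrt ((by positivity : (0 : ℝ) ≤ _).trans (hvar x))]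
    exact hvar x
  have hs_pos (x : X) : 0 < s x := by
    rw [hs x]
    exact Real.sqrt_pos.mpr ((by positivity : (0 : ℝ) < _).trans_le (hvar x))
  have hs_le_one : s xs ≤ 1 := by
    rw [hs xs]
    exact Real.sqrt_le_one.mpr
      (by linarith [dotProduct_inv_add_smul_one_mulVec_nonneg hK hσ2 (v xs)])
  have hνs : 0 < ν * s xs := mul_pos hν (hs_pos xs)
  have hz : (μ xs - μ xp) / (ν * s xs) ≤ 0 := div_nonpos_of_nonpos_of_nonneg
    (sub_nonpos.mpr (hxp xs)) hνs.le
  have hEI_cmp : s xp * tauEI 0 ≤ s xs * tauEI ((μ xs - μ xp) / (ν * s xs)) := by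
    have := hxs xp
    rw [hEI, hEI, sub_self, zero_div, mul_assoc, mul_assoc] at this
    exact le_of_mul_le_mul_left this hν
  refine abs_le_sqrt_mul_of_sq_div_le hνs ?_
  calc ((μ xs - μ xp) / (ν * s xs)) ^ 2
      ≤ -Real.log (s xp ^ 2) :=
        sq_le_neg_log_sq_of_mul_tauEI_le (hs_pos xp) (hs_pos xs).le hs_le_one hz hEI_cmp
    _ ≤ -Real.log (σ ^ 2 / (n + σ ^ 2)) :=
        neg_le_neg (Real.log_le_log (by positivity) (hs_sq xp))
    _ = Real.log (n + σ ^ 2) - Real.log (σ ^ 2) := by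
        rw [Real.log_div hσ2.ne' (by positivity)]
        ring

/-- With posterior mean `μ`, posterior standard deviation `s`, incumbent
`x⁺` maximising `μ`, and expected improvement `EI(x) = ν s(x) τ((μ(x) − μ⁺)/(ν s(x)))`,
any maximiser `x*` of `EI` satisfies
`|μ(x*) − μ⁺| ≤ √(log(n + σ²) − log σ²) · ν s(x*)`. -/
theorem ei_maximizer_mean_gap_bound
    (n : ℕ) (hn : 1 ≤ n) (σ ν : ℝ) (hσ : 0 < σ) (hν : 0 < ν)
    {X : Type*} [Nonempty X]
    (K : Matrix (Fin n) (Fin n) ℝ) (hK : K.PosSemidef) (hdiag : ∀ i, K i i ≤ 1)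
    (y : Fin n → ℝ) (v : X → Fin n → ℝ)
    (hB : ∀ x : X, (Matrix.fromBlocks K
        (Matrix.of fun i (_ : Unit) => v x i)
        (Matrix.of fun (_ : Unit) j => v x j)
        (Matrix.of fun (_ : Unit) (_ : Unit) => (1 : ℝ))).PosSemidef)
    (μ : X → ℝ) (hμ : ∀ x, μ x = v x ⬝ᵥ (K + σ ^ 2 • 1)⁻¹.mulVec y)
    (s : X → ℝ) (hs : ∀ x, s x = Real.sqrt (1 - v x ⬝ᵥ (K + σ ^ 2 • 1)⁻¹.mulVec (v x)))
    (xp : X) (hxp : ∀ x, μ x ≤ μ xp)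
    (EI : X → ℝ) (hEI : ∀ x, EI x = ν * s x * tauEI ((μ x - μ xp) / (ν * s x)))
    (xs : X) (hxs : ∀ x, EI x ≤ EI xs) :
    |μ xs - μ xp| ≤
      Real.sqrt (Real.log (n + σ ^ 2) - Real.log (σ ^ 2)) * (ν * s xs) :=
  ei_maximizer_mean_gap_bound_general n σ ν hσ hν K hK hdiag v hB μ s hs xp hxp EI hEI xs hxs
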